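/- Let U ⊆ ℝ² be a nonempty open set and g a smooth Riemannian metric on U. Then the Ricci tensor of the Levi-Civita connection of g is proportional to the metric: R_{ab} = K g_{ab} on U, where K := ½ g^{ab}R_{ab} is the Gaussian curvature. In particular the Ricci tensor of the Levi-Civita connection of a two-dimensional metric is symmetric. -/

import Mathlib

noncomputable section

/-- The plane ℝ², as `Fin 2 → ℝ`. -/
abbrev E2 : Type := Fin 2 → ℝ

/-- The standard basis vectors of ℝ². -/
def bas (a : Fin 2) : E2 := Pi.single a 1

/-- Partial derivative ∂ₐ of a scalar function on ℝ². -/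
def pd (a : Fin 2) (f : E2 → ℝ) (x : E2) : ℝ := fderiv ℝ f x (bas a)

/-- Components Γ_{ab}{}^c of a Christoffel map Γ : ℝ² → (ℝ² →ₗ ℝ² →ₗ ℝ²). -/
def chr (Γ : E2 → (E2 →ₗ[ℝ] E2 →ₗ[ℝ] E2)) (a b c : Fin 2) (x : E2) : ℝ :=
  Γ x (bas a) (bas b) c

/-- Ricci tensor components built from Christoffel components `Γc a b c` (= Γ_{ab}{}^c):
`R_{ad} = ∂_cΓ_{ad}{}^c − ∂_aΓ_{cd}{}^c + Γ_{cb}{}^cΓ_{ad}{}^b − Γ_{ab}{}^cΓ_{cd}{}^b`. -/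
def ricciC (Γc : Fin 2 → Fin 2 → Fin 2 → E2 → ℝ) (a d : Fin 2) (x : E2) : ℝ :=
  (∑ c, pd c (Γc a d c) x) - (∑ c, pd a (Γc c d c) x)
  + (∑ b, ∑ c, Γc c b c x * Γc a d b x)
  - (∑ b, ∑ c, Γc a b c x * Γc c d b x)

/-- Covariant derivative of the Ricci tensor:
`∇_aR_{bc} = ∂_aR_{bc} − Γ_{ab}{}^dR_{dc} − Γ_{ac}{}^dR_{bd}`. -/
def covRicciC (Γc : Fin 2 → Fin 2 → Fin 2 → E2 → ℝ) (a b c : Fin 2) (x : E2) : ℝ :=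
  pd a (ricciC Γc b c) x - (∑ d, Γc a b d x * ricciC Γc d c x)
    - (∑ d, Γc a c d x * ricciC Γc b d x)

/-- `Y_{abc} = ∇_aR_{bc} − ∇_bR_{ac}`. -/
def YC (Γc : Fin 2 → Fin 2 → Fin 2 → E2 → ℝ) (a b c : Fin 2) (x : E2) : ℝ :=
  covRicciC Γc a b c x - covRicciC Γc b a c x

/-- Levi-Civita Christoffel symbols of a metric `g` (matrix-valued map):
`Γ_{ab}{}^c = ½ g^{cd}(∂_a g_{bd} + ∂_b g_{ad} − ∂_d g_{ab})`. -/
def chrLC (g : E2 → Matrix (Fin 2) (Fin 2) ℝ) (a b c : Fin 2) (x : E2) : ℝ :=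
  (1/2) * ∑ d, (g x)⁻¹ c d *
    (pd a (fun y => g y b d) x + pd b (fun y => g y a d) x - pd d (fun y => g y a b) x)

/-- Gaussian curvature `K = ½ g^{ab} R_{ab}` of a metric on an open subset of ℝ². -/
def gauss (g : E2 → Matrix (Fin 2) (Fin 2) ℝ) (x : E2) : ℝ :=
  (1/2) * ∑ a, ∑ b, (g x)⁻¹ a b * ricciC (chrLC g) a b x

/-! ### Auxiliary partial-derivative calculus -/

section pdcalc
variable {u v : E2 → ℝ} {x : E2} {a : Fin 2}

lemma pd_congr (h : u =ᶠ[nhds x] v) (a : Fin 2) : pd a u x = pd a v x := by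
  unfold pd; rw [h.fderiv_eq]

lemma pd_add (hu : DifferentiableAt ℝ u x) (hv : DifferentiableAt ℝ v x) :
    pd a (fun y => u y + v y) x = pd a u x + pd a v x := by
  unfold pd; rw [fderiv_fun_add hu hv]; rfl

lemma pd_sub (hu : DifferentiableAt ℝ u x) (hv : DifferentiableAt ℝ v x) :
    pd a (fun y => u y - v y) x = pd a u x - pd a v x := by
  unfold pd; rw [fderiv_fun_sub hu hv]; rfl

lemma pd_neg : pd a (fun y => -(u y)) x = -(pd a u x) := by
  unfold pd; rw [fderiv_fun_neg]; rfl

lemma pd_mul (hu : DifferentiableAt ℝ u x) (hv : DifferentiableAt ℝ v x) :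
    pd a (fun y => u y * v y) x = pd a u x * v x + u x * pd a v x := by
  unfold pd; rw [fderiv_fun_mul hu hv]; simp [mul_comm]; ring

lemma pd_const_mul (c : ℝ) (hu : DifferentiableAt ℝ u x) :
    pd a (fun y => c * u y) x = c * pd a u x := by
  unfold pd; rw [fderiv_const_mul hu]; rfl

lemma pd_inv (hu : DifferentiableAt ℝ u x) (h0 : u x ≠ 0) :
    pd a (fun y => (u y)⁻¹) x = -pd a u x * ((u x)⁻¹)^2 := by
  unfold pd
  have : (fun y => (u y)⁻¹) = (fun t : ℝ => t⁻¹) ∘ u := rfl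
  rw [this, fderiv_comp x (differentiableAt_inv h0) hu, fderiv_inv]
  simp [inv_pow]
  try ring

end pdcalc

/-- First partial derivatives of components of `g`, as functions. -/
def pfg (g : E2 → Matrix (Fin 2) (Fin 2) ℝ) (q r s : Fin 2) (y : E2) : ℝ :=
  pd q (fun z => g z r s) y

section snd
variable {g : E2 → Matrix (Fin 2) (Fin 2) ℝ} {x : E2} {r s : Fin 2}

lemma pfg_diff (h : ContDiffAt ℝ (⊤ : ℕ∞) (fun z => g z r s) x) (q : Fin 2) :
    DifferentiableAt ℝ (pfg g q r s) x := by
  have hd : DifferentiableAt ℝ (fderiv ℝ (fun z => g z r s)) x :=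
    (h.fderiv_right (m := 1) (WithTop.coe_le_coe.mpr le_top)).differentiableAt one_ne_zero
  exact ((ContinuousLinearMap.apply ℝ ℝ (bas q)).differentiableAt).comp x hd

lemma pd_pfg_eq (h : ContDiffAt ℝ (⊤ : ℕ∞) (fun z => g z r s) x) (p q : Fin 2) :
    pd p (pfg g q r s) x = fderiv ℝ (fderiv ℝ (fun z => g z r s)) x (bas p) (bas q) := by
  have hd : DifferentiableAt ℝ (fderiv ℝ (fun z => g z r s)) x :=
    (h.fderiv_right (m := 1) (WithTop.coe_le_coe.mpr le_top)).differentiableAt one_ne_zero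
  have : pfg g q r s = fun y =>
      (ContinuousLinearMap.apply ℝ ℝ (bas q)) (fderiv ℝ (fun z => g z r s) y) := rfl
  rw [pd, this, show (fun y =>
      (ContinuousLinearMap.apply ℝ ℝ (bas q)) (fderiv ℝ (fun z => g z r s) y))
      = (ContinuousLinearMap.apply ℝ ℝ (bas q)) ∘ (fderiv ℝ (fun z => g z r s)) from rfl,
    fderiv_comp x (ContinuousLinearMap.apply ℝ ℝ (bas q)).differentiableAt hd]
  simp

lemma pd_pfg_symm (h : ContDiffAt ℝ (⊤ : ℕ∞) (fun z => g z r s) x) (p q : Fin 2) :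
    pd p (pfg g q r s) x = pd q (pfg g p r s) x := by
  rw [pd_pfg_eq h, pd_pfg_eq h]
  exact (h.isSymmSndFDerivAt (by rw [minSmoothness_of_isRCLikeNormedField]; exact WithTop.coe_le_coe.mpr le_top)) (bas p) (bas q)

end snd

/-- Determinant of `g` as a scalar function. -/
def detf (g : E2 → Matrix (Fin 2) (Fin 2) ℝ) (y : E2) : ℝ :=
  g y 0 0 * g y 1 1 - g y 0 1 * g y 1 0

/-- Adjugate entries of `g` as scalar functions. -/
def Af (g : E2 → Matrix (Fin 2) (Fin 2) ℝ) (c d : Fin 2) (y : E2) : ℝ :=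
  (g y).adjugate c d

/-- The combination `∂_a g_{bd} + ∂_b g_{ad} − ∂_d g_{ab}`. -/
def Wf (g : E2 → Matrix (Fin 2) (Fin 2) ℝ) (a b d : Fin 2) (y : E2) : ℝ :=
  pfg g a b d y + pfg g b a d y - pfg g d a b y

section mat
variable {g : E2 → Matrix (Fin 2) (Fin 2) ℝ}

lemma inv_entry (g : E2 → Matrix (Fin 2) (Fin 2) ℝ) (c d : Fin 2) (y : E2) :
    (g y)⁻¹ c d = (detf g y)⁻¹ * Af g c d y := by
  rw [Matrix.inv_def]
  simp [Ring.inverse_eq_inv', Af, detf, Matrix.det_fin_two, Matrix.smul_apply, smul_eq_mul]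

lemma Af00 (g : E2 → Matrix (Fin 2) (Fin 2) ℝ) : Af g 0 0 = fun y => g y 1 1 := by
  funext y; simp [Af, Matrix.adjugate_fin_two]

lemma Af01 (g : E2 → Matrix (Fin 2) (Fin 2) ℝ) : Af g 0 1 = fun y => -(g y 0 1) := by
  funext y; simp [Af, Matrix.adjugate_fin_two]

lemma Af10 (g : E2 → Matrix (Fin 2) (Fin 2) ℝ) : Af g 1 0 = fun y => -(g y 1 0) := by
  funext y; simp [Af, Matrix.adjugate_fin_two]

lemma Af11 (g : E2 → Matrix (Fin 2) (Fin 2) ℝ) : Af g 1 1 = fun y => g y 0 0 := by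
  funext y; simp [Af, Matrix.adjugate_fin_two]

lemma chr_fun (g : E2 → Matrix (Fin 2) (Fin 2) ℝ) (a b c : Fin 2) :
    chrLC g a b c = fun y => (1/2) *
      ((detf g y)⁻¹ * Af g c 0 y * Wf g a b 0 y
        + (detf g y)⁻¹ * Af g c 1 y * Wf g a b 1 y) := by
  funext y
  rw [chrLC, Fin.sum_univ_two, inv_entry, inv_entry]
  simp only [Wf, pfg]

end mat

set_option maxHeartbeats 2000000 in
lemma ricci_prop (U : Set E2) (hUo : IsOpen U) {g : E2 → Matrix (Fin 2) (Fin 2) ℝ} {x : E2}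
    (hx : x ∈ U)
    (hg : ∀ r s : Fin 2, ContDiffOn ℝ (⊤ : ℕ∞) (fun z => g z r s) U)
    (hsymm : ∀ y ∈ U, ∀ r s : Fin 2, g y r s = g y s r)
    (hdetx : detf g x ≠ 0) :
    ∀ a b : Fin 2, ricciC (chrLC g) a b x = gauss g x * g x a b := by
  have hfx : ∀ y ∈ U, ∀ r s : Fin 2, ContDiffAt ℝ (⊤ : ℕ∞) (fun z => g z r s) y :=
    fun y hy r s => (hg r s).contDiffAt (hUo.mem_nhds hy)
  have hdf : ∀ r s : Fin 2, DifferentiableAt ℝ (fun z => g z r s) x :=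
    fun r s => (hfx x hx r s).differentiableAt (by simp)
  have hdpf : ∀ q r s : Fin 2, DifferentiableAt ℝ (pfg g q r s) x :=
    fun q r s => pfg_diff (hfx x hx r s) q
  have hdet_d : DifferentiableAt ℝ (detf g) x :=
    ((hdf 0 0).fun_mul (hdf 1 1)).fun_sub ((hdf 0 1).fun_mul (hdf 1 0))
  have hdinv : DifferentiableAt ℝ (fun y => (detf g y)⁻¹) x := hdet_d.inv hdetx
  have hdA : ∀ c d : Fin 2, DifferentiableAt ℝ (Af g c d) x := by
    have h00 : DifferentiableAt ℝ (Af g 0 0) x := by rw [Af00]; exact hdf 1 1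
    have h01 : DifferentiableAt ℝ (Af g 0 1) x := by rw [Af01]; exact (hdf 0 1).neg
    have h10 : DifferentiableAt ℝ (Af g 1 0) x := by rw [Af10]; exact (hdf 1 0).neg
    have h11 : DifferentiableAt ℝ (Af g 1 1) x := by rw [Af11]; exact hdf 0 0
    intro c d
    fin_cases c <;> fin_cases d
    · exact h00
    · exact h01
    · exact h10
    · exact h11
  have hdW : ∀ a b d : Fin 2, DifferentiableAt ℝ (Wf g a b d) x :=
    fun a b d => ((hdpf a b d).fun_add (hdpf b a d)).fun_sub (hdpf d a b)
  have hpd_detf : ∀ p : Fin 2, pd p (detf g) x =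
      pfg g p 0 0 x * g x 1 1 + g x 0 0 * pfg g p 1 1 x
        - (pfg g p 0 1 x * g x 1 0 + g x 0 1 * pfg g p 1 0 x) := by
    intro p
    rw [show detf g = fun y => g y 0 0 * g y 1 1 - g y 0 1 * g y 1 0 from rfl,
      pd_sub ((hdf 0 0).fun_mul (hdf 1 1)) ((hdf 0 1).fun_mul (hdf 1 0)),
      pd_mul (hdf 0 0) (hdf 1 1), pd_mul (hdf 0 1) (hdf 1 0)]
    rfl
  have hpdW : ∀ p a b d : Fin 2, pd p (Wf g a b d) x =
      pd p (pfg g a b d) x + pd p (pfg g b a d) x - pd p (pfg g d a b) x := by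
    intro p a b d
    rw [show Wf g a b d = fun y => pfg g a b d y + pfg g b a d y - pfg g d a b y from rfl,
      pd_sub ((hdpf a b d).fun_add (hdpf b a d)) (hdpf d a b),
      pd_add (hdpf a b d) (hdpf b a d)]
  have hchr_val : ∀ a b c : Fin 2, chrLC g a b c x = (1/2) *
      ((detf g x)⁻¹ * Af g c 0 x * Wf g a b 0 x
        + (detf g x)⁻¹ * Af g c 1 x * Wf g a b 1 x) :=
    fun a b c => congrFun (chr_fun g a b c) x
  have hpd_chr : ∀ p a b c : Fin 2, pd p (chrLC g a b c) x =
      (1/2) * (((-pd p (detf g) x * ((detf g x)⁻¹)^2 * Af g c 0 x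
            + (detf g x)⁻¹ * pd p (Af g c 0) x) * Wf g a b 0 x
          + (detf g x)⁻¹ * Af g c 0 x * pd p (Wf g a b 0) x)
        + ((-pd p (detf g) x * ((detf g x)⁻¹)^2 * Af g c 1 x
            + (detf g x)⁻¹ * pd p (Af g c 1) x) * Wf g a b 1 x
          + (detf g x)⁻¹ * Af g c 1 x * pd p (Wf g a b 1) x)) := by
    intro p a b c
    rw [chr_fun g a b c,
      pd_const_mul _ (((hdinv.fun_mul (hdA c 0)).fun_mul (hdW a b 0)).fun_add
        ((hdinv.fun_mul (hdA c 1)).fun_mul (hdW a b 1))),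
      pd_add ((hdinv.fun_mul (hdA c 0)).fun_mul (hdW a b 0)) ((hdinv.fun_mul (hdA c 1)).fun_mul (hdW a b 1)),
      pd_mul (hdinv.fun_mul (hdA c 0)) (hdW a b 0), pd_mul hdinv (hdA c 0),
      pd_mul (hdinv.fun_mul (hdA c 1)) (hdW a b 1), pd_mul hdinv (hdA c 1),
      pd_inv hdet_d hdetx]
    try ring
  have hpdA00 : ∀ p : Fin 2, pd p (Af g 0 0) x = pfg g p 1 1 x := by
    intro p; rw [Af00]; try rfl
  have hpdA01 : ∀ p : Fin 2, pd p (Af g 0 1) x = -pfg g p 0 1 x := by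
    intro p; rw [Af01, pd_neg]; try rfl
  have hpdA10 : ∀ p : Fin 2, pd p (Af g 1 0) x = -pfg g p 1 0 x := by
    intro p; rw [Af10, pd_neg]; try rfl
  have hpdA11 : ∀ p : Fin 2, pd p (Af g 1 1) x = pfg g p 0 0 x := by
    intro p; rw [Af11]; try rfl
  have hev10 : ∀ y ∈ U, (fun z => g z 1 0) =ᶠ[nhds y] (fun z => g z 0 1) := by
    intro y hy
    filter_upwards [hUo.mem_nhds hy] with z hz using hsymm z hz 1 0
  have hg10 : g x 1 0 = g x 0 1 := hsymm x hx 1 0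
  have hD10 : ∀ p : Fin 2, pfg g p 1 0 x = pfg g p 0 1 x :=
    fun p => pd_congr (hev10 x hx) p
  have hpf10 : ∀ p q : Fin 2, pd p (pfg g q 1 0) x = pd p (pfg g q 0 1) x := by
    intro p q
    refine pd_congr ?_ p
    filter_upwards [hUo.mem_nhds hx] with y hy using pd_congr (hev10 y hy) q
  have hschw : ∀ r s : Fin 2, pd 1 (pfg g 0 r s) x = pd 0 (pfg g 1 r s) x :=
    fun r s => pd_pfg_symm (hfx x hx r s) 1 0
  have hE : (g x 0 0 * g x 1 1 - g x 0 1 * g x 0 1) * (detf g x)⁻¹ = 1 := by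
    rw [show g x 0 0 * g x 1 1 - g x 0 1 * g x 0 1 = detf g x by rw [detf, hg10]]
    exact mul_inv_cancel₀ hdetx
  have k00 : ricciC (chrLC g) 0 0 x = gauss g x * g x 0 0 := by
    simp only [ricciC, gauss, Fin.sum_univ_two]
    simp only [hpd_chr, hchr_val, inv_entry]
    simp only [hpdW, hpd_detf, hpdA00, hpdA01, hpdA10, hpdA11]
    simp only [Af00, Af01, Af10, Af11]
    simp only [Wf]
    simp only [hg10, hD10, hpf10, hschw]
    linear_combination (((1)/2) * (pfg g 1 0 0 x)^2 * ((detf g x)⁻¹) + ((-3)/2) * (pfg g 0 0 1 x) * (pfg g 1 0 0 x) * ((detf g x)⁻¹) + ((1)/2) * (pfg g 0 0 0 x) * (pfg g 1 0 1 x) * ((detf g x)⁻¹) + ((1)/2) * (pfg g 0 0 0 x) * (pfg g 0 1 1 x) * ((detf g x)⁻¹) + ((1)/2) * (g x 0 0) * (pd 1 (pfg g 1 0 0) x) * ((detf g x)⁻¹) + (-1) * (g x 0 0) * (pd 0 (pfg g 1 0 1) x) * ((detf g x)⁻¹) + ((1)/2) * (g x 0 0) * (pd 0 (pfg g 0 1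 1) x) * ((detf g x)⁻¹) + ((-1)/2) * (g x 0 0) * (g x 1 1) * (pfg g 1 0 0 x)^2 * ((detf g x)⁻¹)^2 + ((3)/4) * (g x 0 0) * (g x 1 1) * (pfg g 0 0 1 x) * (pfg g 1 0 0 x) * ((detf g x)⁻¹)^2 + ((1)/4) * (g x 0 0) * (g x 1 1) * (pfg g 0 0 0 x) * (pfg g 1 0 1 x) * ((detf g x)⁻¹)^2 + ((-1)/2) * (g x 0 0) * (g x 1 1) * (pfg g 0 0 0 x) * (pfg g 0 1 1 x) * ((detf g x)⁻¹)^2 + (1) * (g x 0 0) * (g x 0 1) * (pfg g 1 0 0 x) * (pfg g 1 0 1 x) * ((detf g x)⁻¹)^2 + ((-1)/4) * (g x 0 0) * (g x 0 1) * (pfg g 0 1 1 x) * (pfg g 1 0 0 x) * ((detf g x)⁻¹)^2 + (-2) * (g x 0 0) * (g x 0 1) * (pfg g 0 0 1 x) * (pfg g 1 0 1 x) * ((detf g x)⁻¹)^2 + (1) * (g x 0 0) * (g x 0 1) * (pfg g 0 0 1 x) * (pfg g 0 1 1 x) * ((detf g x)⁻¹)^2 + ((1)/4) * (g x 0 0)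 * (g x 0 1) * (pfg g 0 0 0 x) * (pfg g 1 1 1 x) * ((detf g x)⁻¹)^2 + ((-1)/2) * (g x 0 0)^2 * (pfg g 1 0 0 x) * (pfg g 1 1 1 x) * ((detf g x)⁻¹)^2 + ((3)/4) * (g x 0 0)^2 * (pfg g 0 1 1 x) * (pfg g 1 0 1 x) * ((detf g x)⁻¹)^2 + ((-1)/2) * (g x 0 0)^2 * (pfg g 0 1 1 x)^2 * ((detf g x)⁻¹)^2 + ((1)/4) * (g x 0 0)^2 * (pfg g 0 0 1 x) * (pfg g 1 1 1 x) * ((detf g x)⁻¹)^2) * hE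
  have k01 : ricciC (chrLC g) 0 1 x = gauss g x * g x 0 1 := by
    simp only [ricciC, gauss, Fin.sum_univ_two]
    simp only [hpd_chr, hchr_val, inv_entry]
    simp only [hpdW, hpd_detf, hpdA00, hpdA01, hpdA10, hpdA11]
    simp only [Af00, Af01, Af10, Af11]
    simp only [Wf]
    simp only [hg10, hD10, hpf10, hschw]
    linear_combination (((1)/2) * (pfg g 1 0 0 x) * (pfg g 1 0 1 x) * ((detf g x)⁻¹) + ((-1)/2) * (pfg g 0 1 1 x) * (pfg g 1 0 0 x) * ((detf g x)⁻¹) + (-1) * (pfg g 0 0 1 x) * (pfg g 1 0 1 x) * ((detf g x)⁻¹) + ((1)/2) * (pfg g 0 0 1 x) * (pfg g 0 1 1 x) * ((detf g x)⁻¹) + ((1)/2) * (pfg g 0 0 0 x) * (pfg g 1 1 1 x) * ((detf g x)⁻¹) + ((1)/2) * (g x 0 1) * (pd 1 (pfg g 1 0 0) x) * ((detf g x)⁻¹) + (-1) * (g x 0 1) * (pd 0 (pfg g 1 0 1) x) * ((detf g x)⁻¹) + ((1)/2) * (g x 0 1) * (pd 0 (pfg g 0 1 1) x) * ((detf g x)⁻¹)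 + ((-1)/2) * (g x 0 1) * (g x 1 1) * (pfg g 1 0 0 x)^2 * ((detf g x)⁻¹)^2 + ((3)/4) * (g x 0 1) * (g x 1 1) * (pfg g 0 0 1 x) * (pfg g 1 0 0 x) * ((detf g x)⁻¹)^2 + ((1)/4) * (g x 0 1) * (g x 1 1) * (pfg g 0 0 0 x) * (pfg g 1 0 1 x) * ((detf g x)⁻¹)^2 + ((-1)/2) * (g x 0 1) * (g x 1 1) * (pfg g 0 0 0 x) * (pfg g 0 1 1 x) * ((detf g x)⁻¹)^2 + (1) * (g x 0 1)^2 * (pfg g 1 0 0 x) * (pfg g 1 0 1 x) * ((detf g x)⁻¹)^2 + ((-1)/4) * (g x 0 1)^2 * (pfg g 0 1 1 x) * (pfg g 1 0 0 x) * ((detf g x)⁻¹)^2 + (-2) * (g x 0 1)^2 * (pfg g 0 0 1 x) * (pfg g 1 0 1 x) * ((detf g x)⁻¹)^2 + (1) * (g x 0 1)^2 * (pfg g 0 0 1 x) * (pfg g 0 1 1 x) * ((detf g x)⁻¹)^2 + ((1)/4) * (g x 0 1)^2 * (pfg g 0 0 0 x) * (pfg g 1 1 1 x) * ((detf g x)⁻¹)^2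 + ((-1)/2) * (g x 0 0) * (g x 0 1) * (pfg g 1 0 0 x) * (pfg g 1 1 1 x) * ((detf g x)⁻¹)^2 + ((3)/4) * (g x 0 0) * (g x 0 1) * (pfg g 0 1 1 x) * (pfg g 1 0 1 x) * ((detf g x)⁻¹)^2 + ((-1)/2) * (g x 0 0) * (g x 0 1) * (pfg g 0 1 1 x)^2 * ((detf g x)⁻¹)^2 + ((1)/4) * (g x 0 0) * (g x 0 1) * (pfg g 0 0 1 x) * (pfg g 1 1 1 x) * ((detf g x)⁻¹)^2) * hE
  have k10 : ricciC (chrLC g) 1 0 x = gauss g x * g x 1 0 := by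
    simp only [ricciC, gauss, Fin.sum_univ_two]
    simp only [hpd_chr, hchr_val, inv_entry]
    simp only [hpdW, hpd_detf, hpdA00, hpdA01, hpdA10, hpdA11]
    simp only [Af00, Af01, Af10, Af11]
    simp only [Wf]
    simp only [hg10, hD10, hpf10, hschw]
    linear_combination (((1)/2) * (pfg g 1 0 0 x) * (pfg g 1 0 1 x) * ((detf g x)⁻¹) + ((-1)/2) * (pfg g 0 1 1 x) * (pfg g 1 0 0 x) * ((detf g x)⁻¹) + (-1) * (pfg g 0 0 1 x) * (pfg g 1 0 1 x) * ((detf g x)⁻¹) + ((1)/2) * (pfg g 0 0 1 x) * (pfg g 0 1 1 x) * ((detf g x)⁻¹) + ((1)/2) * (pfg g 0 0 0 x) * (pfg g 1 1 1 x) * ((detf g x)⁻¹) + ((1)/2) * (g x 0 1) * (pd 1 (pfg g 1 0 0) x) * ((detf g x)⁻¹) + (-1) * (g x 0 1) * (pd 0 (pfg g 1 0 1) x) * ((detf g x)⁻¹) + ((1)/2) * (g x 0 1) * (pd 0 (pfg g 0 1 1) x) * ((detf g x)⁻¹) + ((-1)/2) * (g x 0 1) * (g x 1 1) * (pfg g 1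 0 0 x)^2 * ((detf g x)⁻¹)^2 + ((3)/4) * (g x 0 1) * (g x 1 1) * (pfg g 0 0 1 x) * (pfg g 1 0 0 x) * ((detf g x)⁻¹)^2 + ((1)/4) * (g x 0 1) * (g x 1 1) * (pfg g 0 0 0 x) * (pfg g 1 0 1 x) * ((detf g x)⁻¹)^2 + ((-1)/2) * (g x 0 1) * (g x 1 1) * (pfg g 0 0 0 x) * (pfg g 0 1 1 x) * ((detf g x)⁻¹)^2 + (1) * (g x 0 1)^2 * (pfg g 1 0 0 x) * (pfg g 1 0 1 x) * ((detf g x)⁻¹)^2 + ((-1)/4) * (g x 0 1)^2 * (pfg g 0 1 1 x) * (pfg g 1 0 0 x) * ((detf g x)⁻¹)^2 + (-2) * (g x 0 1)^2 * (pfg g 0 0 1 x) * (pfg g 1 0 1 x) * ((detf g x)⁻¹)^2 + (1) * (g x 0 1)^2 * (pfg g 0 0 1 x) * (pfg g 0 1 1 x) * ((detf g x)⁻¹)^2 + ((1)/4) * (g x 0 1)^2 * (pfg g 0 0 0 x) * (pfg g 1 1 1 x) * ((detf g x)⁻¹)^2 + ((-1)/2) * (g x 0 0) * (g x 0 1) *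 (pfg g 1 0 0 x) * (pfg g 1 1 1 x) * ((detf g x)⁻¹)^2 + ((3)/4) * (g x 0 0) * (g x 0 1) * (pfg g 0 1 1 x) * (pfg g 1 0 1 x) * ((detf g x)⁻¹)^2 + ((-1)/2) * (g x 0 0) * (g x 0 1) * (pfg g 0 1 1 x)^2 * ((detf g x)⁻¹)^2 + ((1)/4) * (g x 0 0) * (g x 0 1) * (pfg g 0 0 1 x) * (pfg g 1 1 1 x) * ((detf g x)⁻¹)^2) * hE
  have k11 : ricciC (chrLC g) 1 1 x = gauss g x * g x 1 1 := by
    simp only [ricciC, gauss, Fin.sum_univ_two]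
    simp only [hpd_chr, hchr_val, inv_entry]
    simp only [hpdW, hpd_detf, hpdA00, hpdA01, hpdA10, hpdA11]
    simp only [Af00, Af01, Af10, Af11]
    simp only [Wf]
    simp only [hg10, hD10, hpf10, hschw]
    linear_combination (((1)/2) * (pfg g 1 0 0 x) * (pfg g 1 1 1 x) * ((detf g x)⁻¹) + ((-3)/2) * (pfg g 0 1 1 x) * (pfg g 1 0 1 x) * ((detf g x)⁻¹) + ((1)/2) * (pfg g 0 1 1 x)^2 * ((detf g x)⁻¹) + ((1)/2) * (pfg g 0 0 1 x) * (pfg g 1 1 1 x) * ((detf g x)⁻¹) + ((1)/2) * (g x 1 1) * (pd 1 (pfg g 1 0 0) x) * ((detf g x)⁻¹) + (-1) * (g x 1 1) * (pd 0 (pfg g 1 0 1) x) * ((detf g x)⁻¹) + ((1)/2) * (g x 1 1) * (pd 0 (pfg g 0 1 1) x) * ((detf g x)⁻¹) + ((-1)/2) * (g x 1 1)^2 * (pfg g 1 0 0 x)^2 * ((detf g x)⁻¹)^2 + ((3)/4) * (g x 1 1)^2 * (pfg g 0 0 1 x) * (pfg g 1 0 0 x) * ((detf g x)⁻¹)^2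 + ((1)/4) * (g x 1 1)^2 * (pfg g 0 0 0 x) * (pfg g 1 0 1 x) * ((detf g x)⁻¹)^2 + ((-1)/2) * (g x 1 1)^2 * (pfg g 0 0 0 x) * (pfg g 0 1 1 x) * ((detf g x)⁻¹)^2 + (1) * (g x 0 1) * (g x 1 1) * (pfg g 1 0 0 x) * (pfg g 1 0 1 x) * ((detf g x)⁻¹)^2 + ((-1)/4) * (g x 0 1) * (g x 1 1) * (pfg g 0 1 1 x) * (pfg g 1 0 0 x) * ((detf g x)⁻¹)^2 + (-2) * (g x 0 1) * (g x 1 1) * (pfg g 0 0 1 x) * (pfg g 1 0 1 x) * ((detf g x)⁻¹)^2 + (1) * (g x 0 1) * (g x 1 1) * (pfg g 0 0 1 x) * (pfg g 0 1 1 x) * ((detf g x)⁻¹)^2 + ((1)/4) * (g x 0 1) * (g x 1 1) * (pfg g 0 0 0 x) * (pfg g 1 1 1 x) * ((detf g x)⁻¹)^2 + ((-1)/2) * (g x 0 0) * (g x 1 1) * (pfg g 1 0 0 x) * (pfg g 1 1 1 x) * ((detf g x)⁻¹)^2 + ((3)/4) * (g x 0 0) * (g x 1 1) * (pfg g 0 1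 1 x) * (pfg g 1 0 1 x) * ((detf g x)⁻¹)^2 + ((-1)/2) * (g x 0 0) * (g x 1 1) * (pfg g 0 1 1 x)^2 * ((detf g x)⁻¹)^2 + ((1)/4) * (g x 0 0) * (g x 1 1) * (pfg g 0 0 1 x) * (pfg g 1 1 1 x) * ((detf g x)⁻¹)^2) * hE
  intro a b
  fin_cases a <;> fin_cases b
  · exact k00
  · exact k01
  · exact k10
  · exact k11

/-- in two dimensions the Ricci tensor of the Levi-Civita connection is
proportional to the metric, `R_{ab} = K g_{ab}` with `K = ½ g^{ab}R_{ab}`; in particular it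
is symmetric. -/
theorem stmt_11 (U : Set E2) (hUo : IsOpen U) (hUne : U.Nonempty)
    (g : E2 → Matrix (Fin 2) (Fin 2) ℝ)
    (hg : ∀ a b : Fin 2, ContDiffOn ℝ (⊤ : ℕ∞) (fun x => g x a b) U)
    (hpos : ∀ x ∈ U, (g x).PosDef) :
    (∀ x ∈ U, ∀ a b : Fin 2, ricciC (chrLC g) a b x = gauss g x * g x a b) ∧
    (∀ x ∈ U, ∀ a b : Fin 2, ricciC (chrLC g) a b x = ricciC (chrLC g) b a x) := by
  have hsymm : ∀ y ∈ U, ∀ r s : Fin 2, g y r s = g y s r := by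
    intro y hy r s
    have h := (hpos y hy).1
    have h2 := h.apply s r
    simpa using h2
  have hdet : ∀ y ∈ U, detf g y ≠ 0 := by
    intro y hy
    have h := (hpos y hy).det_pos
    rw [Matrix.det_fin_two] at h
    exact ne_of_gt h
  have key : ∀ x ∈ U, ∀ a b : Fin 2, ricciC (chrLC g) a b x = gauss g x * g x a b :=
    fun x hx a b => ricci_prop U hUo hx hg hsymm (hdet x hx) a b
  refine ⟨key, fun x hx a b => ?_⟩
  rw [key x hx a b, key x hx b a, hsymm x hx a b]
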